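/- arXiv:0904.2558 — 5 statements merged into one kernel-verified Lean document; each statement's English description precedes it below -/
import Mathlib

section
/- Let X = O_2^n be the rack of transpositions in S_n under conjugation. Define χ : X × X → {±1} by: for σ ∈ X and τ = (i j) with i < j, set χ(σ,τ) = 1 if σ(i) < σ(j) and χ(σ,τ) = -1 if σ(i) > σ(j). Then χ is a rack 2-cocycle: χ(σ, τ▷ρ)·χ(τ,ρ) = χ(σ▷τ, σ▷ρ)·χ(σ,ρ) for all σ,τ,ρ ∈ X, where σ▷τ = στσ⁻¹. -/
/-- The function `χ` on the rack of transpositions of `S_n`, defined by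
`χ(σ, (i j)) = 1` if `σ(i) < σ(j)` and `-1` if `σ(i) > σ(j)` (for `i < j`), is a
rack 2-cocycle for the conjugation rack structure `σ ▷ τ = στσ⁻¹`. -/
theorem chi_is_rack_cocycle (n : ℕ) (χ : Equiv.Perm (Fin n) → Equiv.Perm (Fin n) → ℤ)
    (hχ : ∀ (σ : Equiv.Perm (Fin n)) (i j : Fin n), i < j →
      χ σ (Equiv.swap i j) = if σ i < σ j then 1 else -1) :
    ∀ σ τ ρ : Equiv.Perm (Fin n), σ.IsSwap → τ.IsSwap → ρ.IsSwap →
      χ σ (τ * ρ * τ⁻¹) * χ τ ρ = χ (σ * τ * σ⁻¹) (σ * ρ * σ⁻¹) * χ σ ρ := by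
  have key : ∀ (σ : Equiv.Perm (Fin n)) (i j : Fin n), i ≠ j →
      χ σ (Equiv.swap i j) =
        (if σ i < σ j then 1 else -1) * (if i < j then 1 else -1) := by
    intro σ i j hij
    rcases lt_or_gt_of_ne hij with h | h
    · rw [hχ σ i j h, if_pos h, mul_one]
    · rw [Equiv.swap_comm, hχ σ j i h, if_neg (not_lt.2 h.le)]
      have hne : σ i ≠ σ j := fun he => hij (σ.injective he)
      rcases lt_or_gt_of_ne hne with h2 | h2
      · rw [if_neg (not_lt.2 h2.le), if_pos h2]; ring
      · rw [if_pos h2, if_neg (not_lt.2 h2.le)]; ring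
  rintro σ τ ρ - - ⟨i, j, hij, rfl⟩
  rw [← Equiv.swap_apply_apply τ i j, ← Equiv.swap_apply_apply σ i j]
  have hτ : τ i ≠ τ j := fun he => hij (τ.injective he)
  have hσ : σ i ≠ σ j := fun he => hij (σ.injective he)
  rw [key σ _ _ hτ, key τ _ _ hij, key _ _ _ hσ, key σ _ _ hij]
  have e1 : (σ * τ * σ⁻¹) (σ i) = σ (τ i) := by simp
  have e2 : (σ * τ * σ⁻¹) (σ j) = σ (τ j) := by simp
  rw [e1, e2]
  split_ifs <;> ring
end

section
/- Let (X,▷) be a finite rack with 2-cocycle q, and let (X⁻¹,▷⁻¹) be the inverse rack. Define q̃(k,l) = q(k, k▷⁻¹l). Then q̃ is a 2-cocycle on (X⁻¹,▷⁻¹), and the braiding c^{q̃}(y^k ⊗ y^l) = q̃(k,l)·y^{k▷⁻¹l} ⊗ y^k on kX⁻¹ is dual to c^q: for the pairing ⟨x_i ⊗ x_j, y^k ⊗ y^l⟩ = δ_{i,l}δ_{j,k}, one has ⟨c^q(x_i ⊗ x_j), y^k ⊗ y^l⟩ = ⟨x_i ⊗ x_j, c^{q̃}(y^k ⊗ y^l)⟩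 for all i,j,k,l ∈ X. -/
/-- If `(X,▷)` is a finite rack with 2-cocycle `q` and `(X,▷⁻¹)` is the
inverse rack, then `q̃(k,l) := q(k, k▷⁻¹l)` is a 2-cocycle on the inverse rack, and the
braiding `c^{q̃}(y^k ⊗ y^l) = q̃(k,l)·y^{k▷⁻¹l} ⊗ y^k` is dual to
`c^q(x_i ⊗ x_j) = q(i,j)·x_{i▷j} ⊗ x_i` under the pairing
`⟨x_i ⊗ x_j, y^k ⊗ y^l⟩ = δ_{i,l}δ_{j,k}`. -/
theorem dual_cocycle_and_dual_braiding {X : Type*} [Finite X] [DecidableEq X] {k : Type*} [Field k]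
    (op : X → X → X)
    (hbij : ∀ i : X, Function.Bijective (op i))
    (hsd : ∀ i j l : X, op i (op j l) = op (op i j) (op i l))
    (inv : X → X → X)
    (hinv : ∀ i j l : X, inv i j = l ↔ op i l = j)
    (q : X → X → kˣ)
    (hq : ∀ i j l : X, q i (op j l) * q j l = q (op i j) (op i l) * q i l)
    (qt : X → X → kˣ)
    (hqt : ∀ a b : X, qt a b = q a (inv a b)) :
    -- `q̃` is a 2-cocycle on the inverse rack `(X,▷⁻¹)`
    (∀ a b c : X, qt a (inv b c) * qt b c = qt (inv a b) (inv a c) * qt a c) ∧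
    -- duality: `⟨c^q(x_i ⊗ x_j), y^a ⊗ y^b⟩ = ⟨x_i ⊗ x_j, c^{q̃}(y^a ⊗ y^b)⟩`,
    -- both sides evaluated on basis elements via the pairing `δ_{i,l}δ_{j,k}`
    (∀ i j a b : X,
      (q i j : k) * ((if op i j = b then (1:k) else 0) * (if i = a then (1:k) else 0)) =
      (qt a b : k) * ((if i = a then (1:k) else 0) * (if j = inv a b then (1:k) else 0))) := by
  constructor
  · intro a b c
    have hab : op a (inv a b) = b := (hinv a b _).mp rfl
    have hac : op a (inv a c) = c := (hinv a c _).mp rfl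
    have hbc : op b (inv b c) = c := (hinv b c _).mp rfl
    have habc : op a (inv a (inv b c)) = inv b c := (hinv a (inv b c) _).mp rfl
    have h1 : op (inv a b) (inv a (inv b c)) = inv a c := by
      apply (hbij a).1
      rw [hsd, hab, habc, hbc, hac]
    have h2 : inv (inv a b) (inv a c) = inv a (inv b c) := (hinv _ _ _).mpr h1
    have key := hq a (inv a b) (inv a (inv b c))
    rw [h1, hab, habc] at key
    rw [hqt, hqt, hqt, hqt, h2]
    exact (mul_comm _ _).trans (key.symm.trans (mul_comm _ _))
  · intro i j a b
    by_cases hia : i = a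
    · subst hia
      by_cases hb : op i j = b
      · have hj : inv i b = j := (hinv i b j).mpr hb
        rw [hqt, hj]
        simp [hb]
      · have hj : ¬ (j = inv i b) := by
          intro h
          exact hb ((hinv i b j).mp h.symm)
        simp [hb, hj]
    · simp [hia]
end

section
/- Let X be a rack, q a 2-cocycle, and let C = {i_1, ..., i_n} be an equivalence class for the relation on X × X generated by (i,j) ∼ (i▷j, i), where i_1 = j, i_2 = i and i_{h+2} = i_{h+1}▷i_h (indices mod n = n(C)). Then the determinant of (c^q + id) restricted to the span U_C of {x_i ⊗ x_j : (i,j) ∈ C} equals (-1)^{n(C)+1}·∏_{h=1}^{n(C)} q(i_{h+1}, i_h) + 1. In particular, ker(c^q + id)|_{U_C} is nonzero if and only if ∏_{h=1}^{n(C)} q(i_{h+1}, i_h) = (-1)^{n(C)}, and in that case it is one-dimensional, spanned by b_C = Σ_{h=1}^{n(C)} η_h(C) x_{i_{h+1}} ⊗ x_{i_h}, where η_1(C)=1 and η_h(C) = (-1)^{h+1} q(i_2,i_1)q(i_3,i_2)···q(i_h,i_{h-1}) for h ≥ 2. -/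
/-- Let `X` be a rack with 2-cocycle `q`, and let
`C = {i_1, …, i_n}` be an equivalence class for the relation generated by
`(i,j) ∼ (i▷j, i)`, encoded by a sequence `ι : ℕ → X` with `ι(h+2) = ι(h+1) ▷ ι(h)`,
period `n` and `n` minimal (the pairs `(ι(h+1), ι(h))`, `h = 1,…,n`, are distinct).
In the basis `e_h = x_{ι(h+1)} ⊗ x_{ι(h)}` (`h = 1,…,n`) of `U_C`, the map
`c^q + id` has matrix `M` with `M_{a,b} = δ_{a,b} + δ_{a,b+1 mod n}·q(ι(b+1+1), ι(b+1))`.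
Then `det M = (-1)^{n+1}·∏_{h=1}^{n} q(ι(h+1), ι(h)) + 1`; the kernel of `M` is nonzero
iff `∏_{h=1}^{n} q(ι(h+1), ι(h)) = (-1)^n`, and in that case it is spanned by the
vector of coefficients `η_h = (-1)^{h+1}·q(ι 2, ι 1)⋯q(ι h, ι (h-1))` of `b_C`. -/
theorem det_and_kernel_of_braiding_plus_id {X : Type*} {k : Type*} [Field k]
    [DecidableEq X]
    (op : X → X → X)
    (hbij : ∀ i : X, Function.Bijective (op i))
    (hsd : ∀ i j l : X, op i (op j l) = op (op i j) (op i l))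
    (q : X → X → kˣ)
    (hq : ∀ i j l : X, q i (op j l) * q j l = q (op i j) (op i l) * q i l)
    (n : ℕ) (hn : 0 < n) (ι : ℕ → X)
    (hrec : ∀ h : ℕ, ι (h + 2) = op (ι (h + 1)) (ι h))
    (hper : ∀ h : ℕ, ι (h + n) = ι h)
    (hmin : ∀ a b : ℕ, 1 ≤ a → a ≤ n → 1 ≤ b → b ≤ n →
      (ι (a + 1), ι a) = (ι (b + 1), ι b) → a = b)
    -- the matrix of `(c^q + id)|_{U_C}` in the basis `e_h = x_{ι(h+1)} ⊗ x_{ι h}`,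
    -- with `h = 1,…,n` identified with `Fin n` via `h ↦ h - 1`
    (M : Matrix (Fin n) (Fin n) k)
    (hM : ∀ a b : Fin n, M a b =
      (if a = b then (1:k) else 0) +
      (if (a : ℕ) = ((b : ℕ) + 1) % n then (q (ι ((b : ℕ) + 2)) (ι ((b : ℕ) + 1)) : k) else 0))
    -- the coefficients `η_h` of `b_C = Σ_{h=1}^{n} η_h x_{ι(h+1)} ⊗ x_{ι h}`
    (η : ℕ → k)
    (hη : ∀ h : ℕ, η h =
      (-1 : k) ^ (h + 1) * ∏ m ∈ Finset.Icc 2 h, (q (ι m) (ι (m - 1)) : k)) :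
    M.det = (-1 : k) ^ (n + 1) * (∏ h ∈ Finset.Icc 1 n, (q (ι (h + 1)) (ι h) : k)) + 1 ∧
    ((∃ v : Fin n → k, v ≠ 0 ∧ M.mulVec v = 0) ↔
      (∏ h ∈ Finset.Icc 1 n, (q (ι (h + 1)) (ι h) : k)) = (-1 : k) ^ n) ∧
    ((∏ h ∈ Finset.Icc 1 n, (q (ι (h + 1)) (ι h) : k)) = (-1 : k) ^ n →
      LinearMap.ker M.mulVecLin =
        Submodule.span k {fun h : Fin n => η ((h : ℕ) + 1)}) := by
 
  have _inst : NeZero n := ⟨hn.ne'⟩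
  obtain ⟨m, rfl⟩ : ∃ m, n = m + 1 := ⟨n - 1, by omega⟩
  set P : k := ∏ h ∈ Finset.Icc 1 (m + 1), (q (ι (h + 1)) (ι h) : k) with hPdef
  set Q : Fin (m + 1) → k := fun b => (q (ι ((b : ℕ) + 2)) (ι ((b : ℕ) + 1)) : k) with hQ
  -- cleaner form of the matrix
  have hcond : ∀ a b : Fin (m + 1), ((a : ℕ) = ((b : ℕ) + 1) % (m + 1)) ↔ a = b + 1 := by
    intro a b
    rw [Fin.ext_iff, Fin.add_def, Fin.val_one']
    conv_lhs => rw [Nat.add_mod, Nat.mod_eq_of_lt b.isLt]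
  have hMQ : ∀ a b : Fin (m + 1), M a b =
      (if a = b then (1:k) else 0) + (if a = b + 1 then Q b else 0) := by
    intro a b
    rw [hM a b]
    exact congrArg _ (if_congr (hcond a b) rfl rfl)
  -- reindexing products
  have hprod : ∀ t : ℕ, ∏ m ∈ Finset.Icc 2 (t + 1), (q (ι m) (ι (m - 1)) : k)
      = ∏ h ∈ Finset.Icc 1 t, (q (ι (h + 1)) (ι h) : k) := by
    intro t
    rw [← Finset.Ico_add_one_right_eq_Icc, ← Finset.Ico_add_one_right_eq_Icc, Finset.prod_Ico_eq_prod_range,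
      Finset.prod_Ico_eq_prod_range]
    have e1 : t + 1 + 1 - 2 = t := by omega
    have e2 : t + 1 - 1 = t := by omega
    rw [e1, e2]
    refine Finset.prod_congr rfl fun i _ => ?_
    have e3 : 2 + i - 1 = 1 + i := by omega
    have e4 : 2 + i = 1 + i + 1 := by omega
    rw [e3, e4]
  have hPQ : P = ∏ b : Fin (m + 1), Q b := by
    rw [hPdef, hQ, Fin.prod_univ_eq_prod_range (fun i => (q (ι (i + 2)) (ι (i + 1)) : k)),
      ← Finset.Ico_add_one_right_eq_Icc, Finset.prod_Ico_eq_prod_range]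
    have e1 : m + 1 + 1 - 1 = m + 1 := by omega
    rw [e1]
    refine Finset.prod_congr rfl fun i _ => ?_
    have e3 : 1 + i + 1 = i + 2 := by omega
    have e4 : 1 + i = i + 1 := by omega
    rw [e3, e4]
  -- determinant
  have hdet : M.det = (-1 : k) ^ (m + 1 + 1) * P + 1 := by
    rw [hPQ]
    rcases Nat.eq_zero_or_pos m with rfl | hm
    · rw [Matrix.det_fin_one, hMQ]
      have h1 : (0 : Fin 1) = 0 + 1 := Subsingleton.elim _ _
      rw [if_pos rfl, if_pos h1, Fin.prod_univ_one]
      ring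
    · have hb1 : ∀ b : Fin (m + 1), b ≠ b + 1 := by
        intro b h
        have h2 : (0 : Fin (m + 1)) = 1 := by
          have := add_left_cancel (a := b) (b := (0 : Fin (m + 1))) (c := 1)
            (by rw [add_zero, ← h])
          exact this
        have h3 : (0 : ℕ) = 1 % (m + 1) := by
          rw [← Fin.val_one' (m + 1), ← h2]; rfl
        rw [Nat.mod_eq_of_lt (by omega)] at h3
        exact one_ne_zero h3.symm
      have hrot : ∀ b : Fin (m + 1), finRotate (m + 1) b = b + 1 := finRotate_succ_apply
      have hne1 : (1 : Equiv.Perm (Fin (m + 1))) ≠ finRotate (m + 1) := by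
        intro h
        have h0 := congrFun (congrArg (fun σ : Equiv.Perm (Fin (m + 1)) => (σ : Fin (m+1) → Fin (m+1))) h) 0
        simp only [Equiv.Perm.coe_one, id_eq, hrot] at h0
        exact hb1 0 h0
      have key : ∀ σ : Equiv.Perm (Fin (m + 1)),
          σ ∉ ({1, finRotate (m + 1)} : Finset (Equiv.Perm (Fin (m + 1)))) →
          (((Equiv.Perm.sign σ : ℤ) : k)) * ∏ b, M (σ b) b = 0 := by
        intro σ hσ
        simp only [Finset.mem_insert, Finset.mem_singleton, not_or] at hσ
        obtain ⟨hσ1, hσ2⟩ := hσ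
        suffices hz : ∏ b, M (σ b) b = 0 by rw [hz, mul_zero]
        by_contra h0
        have hor : ∀ b, σ b = b ∨ σ b = b + 1 := by
          intro b
          by_contra hb
          push_neg at hb
          apply h0
          apply Finset.prod_eq_zero (Finset.mem_univ b)
          rw [hMQ, if_neg hb.1, if_neg hb.2, add_zero]
        by_cases hid : ∀ b, σ b = b
        · exact hσ1 (Equiv.ext hid)
        push_neg at hid
        obtain ⟨b0, hb0⟩ := hid
        have hb0' : σ b0 = b0 + 1 := (hor b0).resolve_left hb0
        have hstep : ∀ b : Fin (m + 1), σ b = b + 1 → σ (b + 1) = b + 1 + 1 := by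
          intro b hb
          rcases hor (b + 1) with h | h
          · exact absurd (σ.injective (hb.trans h.symm)) (hb1 b)
          · exact h
        letI := Fin.instCommRing (m + 1)
        have hall : ∀ j : ℕ, σ (b0 + (j : Fin (m + 1))) = b0 + (j : Fin (m + 1)) + 1 := by
          intro j
          induction j with
          | zero => simpa using hb0'
          | succ i ih =>
            have e : ((i + 1 : ℕ) : Fin (m + 1)) = ((i : ℕ) : Fin (m + 1)) + 1 := by
              push_cast; ring
            rw [e, ← add_assoc]
            exact hstep _ ih
        apply hσ2
        apply Equiv.ext
        intro c
        have hc := hall ((c - b0).val)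
        rw [Fin.cast_val_eq_self] at hc
        have e : b0 + (c - b0) = c := by ring
        rw [e] at hc
        rw [hrot]
        exact hc
      rw [Matrix.det_apply']
      rw [← Finset.sum_subset (Finset.subset_univ ({1, finRotate (m + 1)} :
        Finset (Equiv.Perm (Fin (m + 1))))) (fun σ _ hσ => key σ hσ)]
      rw [Finset.sum_pair hne1]
      have t1 : ∏ b, M ((1 : Equiv.Perm (Fin (m + 1))) b) b = 1 := by
        apply Finset.prod_eq_one
        intro b _
        show M b b = 1
        rw [hMQ, if_pos rfl, if_neg (hb1 b), add_zero]
      have t2 : ∏ b, M (finRotate (m + 1) b) b = ∏ b, Q b := by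
        refine Finset.prod_congr rfl fun b _ => ?_
        rw [hrot, hMQ, if_neg (fun h => hb1 b h.symm), if_pos rfl, zero_add]
      rw [t1, t2, Equiv.Perm.sign_one, sign_finRotate]
      push_cast
      have e : (-1 : k) ^ (m + 1 + 1) = (-1 : k) ^ m := by
        rw [pow_succ, pow_succ]; ring
      rw [e]
      ring
  have hsq : (-1 : k) ^ (m + 1) * (-1 : k) ^ (m + 1) = 1 := by
    rw [← pow_add]
    exact Even.neg_one_pow ⟨m + 1, by ring⟩
  refine ⟨hdet, ?_, ?_⟩
  · rw [Matrix.exists_mulVec_eq_zero_iff, hdet]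
    constructor
    · intro h
      linear_combination (-(-1 : k) ^ (m + 1)) * h - P * hsq
    · intro h
      linear_combination ((-1 : k) ^ (m + 1 + 1)) * h - hsq
  · intro hP
    set w : Fin (m + 1) → k := fun h => η ((h : ℕ) + 1) with hw
    have hη1 : η 1 = 1 := by
      rw [hη 1]
      rw [show Finset.Icc 2 1 = ∅ from Finset.Icc_eq_empty (by omega)]
      simp
    have hηrec : ∀ h : ℕ, 1 ≤ h → η (h + 1) = -(q (ι (h + 1)) (ι h) : k) * η h := by
      intro h hh
      rw [hη, hη, Finset.prod_Icc_succ_top (by omega : 2 ≤ h + 1)]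
      rw [Nat.add_sub_cancel]
      ring
    -- mulVec formula
    have hmv : ∀ (v : Fin (m + 1) → k) (a : Fin (m + 1)),
        M.mulVec v a = v a + Q (a - 1) * v (a - 1) := by
      intro v a
      have hiff : ∀ b : Fin (m + 1), (a = b + 1) = (b = a - 1) := by
        intro b
        rw [eq_iff_iff]
        constructor
        · intro h; rw [h]; exact (add_sub_cancel_right b 1).symm
        · intro h; rw [h]; exact (sub_add_cancel a 1).symm
      simp only [Matrix.mulVec, dotProduct, hMQ, add_mul, Finset.sum_add_distrib, ite_mul,
        one_mul, zero_mul, hiff]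
      rw [Finset.sum_ite_eq Finset.univ a v, Finset.sum_ite_eq' Finset.univ (a - 1)
        (fun b => Q b * v b), if_pos (Finset.mem_univ a), if_pos (Finset.mem_univ (a - 1))]
    have hmv' : ∀ v : Fin (m + 1) → k, M.mulVec v = 0 →
        ∀ b : Fin (m + 1), v (b + 1) + Q b * v b = 0 := by
      intro v hv b
      have h := congrFun hv (b + 1)
      rw [hmv] at h
      have e : b + 1 - 1 = b := by exact add_sub_cancel_right b 1
      rw [e] at h
      exact h
    have hmv'' : ∀ v : Fin (m + 1) → k, (∀ b, v (b + 1) + Q b * v b = 0) → M.mulVec v = 0 := by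
      intro v hv
      funext a
      have h := hv (a - 1)
      have e : a - 1 + 1 = a := by exact sub_add_cancel a 1
      rw [e] at h
      rw [hmv]
      exact h
    -- the recursion for w, including the wrap-around using hP
    have wrec : ∀ b : Fin (m + 1), w (b + 1) + Q b * w b = 0 := by
      intro b
      by_cases hb : b = Fin.last m
      · subst hb
        rw [Fin.last_add_one]
        show η ((0 : Fin (m+1)).val + 1) + Q (Fin.last m) * η ((Fin.last m).val + 1) = 0
        rw [show ((0 : Fin (m+1)).val + 1) = 1 by simp, Fin.val_last, hη1]
        have hQlast : Q (Fin.last m) = (q (ι (m + 2)) (ι (m + 1)) : k) := by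
          rw [hQ]; simp [Fin.val_last]
        have he : (∏ t ∈ Finset.Icc 2 (m + 1), (q (ι t) (ι (t - 1)) : k))
            * (q (ι (m + 2)) (ι (m + 1)) : k) = (-1 : k) ^ (m + 1) := by
          have e2 := Finset.prod_Icc_succ_top (by omega : 2 ≤ m + 1 + 1)
            (fun t => (q (ι t) (ι (t - 1)) : k))
          rw [Nat.add_sub_cancel] at e2
          rw [← e2, hprod (m + 1)]
          exact hP
        rw [hQlast, hη (m + 1)]
        have hsgn : (-1 : k) ^ (m + 1 + 1) * (-1 : k) ^ (m + 1) = -1 := by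
          rw [← pow_add]
          exact Odd.neg_one_pow ⟨m + 1, by ring⟩
        linear_combination ((-1 : k) ^ (m + 1 + 1)) * he + hsgn
      · have hblt : b < Fin.last m := lt_of_le_of_ne (Fin.le_last b) hb
        have e1 : ((b + 1 : Fin (m + 1)) : ℕ) = (b : ℕ) + 1 := Fin.val_add_one_of_lt hblt
        show η ((b + 1 : Fin (m+1)).val + 1) + Q b * η ((b : ℕ) + 1) = 0
        rw [e1, hQ]
        have := hηrec ((b : ℕ) + 1) (by omega)
        rw [this]
        ring
    have wker : M.mulVec w = 0 := hmv'' w wrec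
    apply le_antisymm
    · intro v hv
      rw [LinearMap.mem_ker, Matrix.mulVecLin_apply] at hv
      have hrec' := hmv' v hv
      rw [Submodule.mem_span_singleton]
      refine ⟨v 0, ?_⟩
      have hind : ∀ j : ℕ, ∀ hj : j < m + 1, v ⟨j, hj⟩ = v 0 * w ⟨j, hj⟩ := by
        intro j
        induction j with
        | zero =>
          intro hj
          have hw0 : w ⟨0, hj⟩ = 1 := by
            show η ((⟨0, hj⟩ : Fin (m+1)).val + 1) = 1
            simpa using hη1
          rw [hw0, mul_one]
          rfl
        | succ i ih =>
          intro hj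
          have hi : i < m + 1 := by omega
          have e : (⟨i, hi⟩ : Fin (m + 1)) + 1 = ⟨i + 1, hj⟩ := by
            have hlt : (⟨i, hi⟩ : Fin (m + 1)) < Fin.last m := by
              rw [Fin.lt_def, Fin.val_last]; simpa using (by omega : i < m)
            apply Fin.ext
            rw [Fin.val_add_one_of_lt hlt]
          have h1 := hrec' ⟨i, hi⟩
          have h2 := wrec ⟨i, hi⟩
          rw [e] at h1 h2
          have h3 := ih hi
          linear_combination h1 - v 0 * h2 - Q ⟨i, hi⟩ * h3
      funext c
      have := hind c.val c.isLt
      simp only [Fin.eta] at this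
      simpa [hw] using this.symm
    · rw [Submodule.span_le, Set.singleton_subset_iff]
      rw [SetLike.mem_coe, LinearMap.mem_ker, Matrix.mulVecLin_apply]
      exact wker
end

section
/- When X = O_2^n (transpositions in S_n, n ≥ 3) or X = O_4^4 (4-cycles in S_4) with the conjugation rack structure, every equivalence class C in X × X for the relation generated by (i,j) ∼ (i▷j, i) has exactly 1, 2 or 3 elements. -/
/-- The generating relation `(i,j) ∼ (i▷j, i)` (with `i▷j = iji⁻¹`) on pairs of
elements of a conjugation subrack of a symmetric group, expressed on underlying
permutations. -/
def genRel {n : ℕ} {P : Equiv.Perm (Fin n) → Prop}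
    (a b : {σ : Equiv.Perm (Fin n) // P σ} × {σ : Equiv.Perm (Fin n) // P σ}) : Prop :=
  (b.1 : Equiv.Perm (Fin n)) =
      (a.1 : Equiv.Perm (Fin n)) * (a.2 : Equiv.Perm (Fin n)) * (a.1 : Equiv.Perm (Fin n))⁻¹ ∧
    (b.2 : Equiv.Perm (Fin n)) = (a.1 : Equiv.Perm (Fin n))

section Aux

variable {n : ℕ} {P : Equiv.Perm (Fin n) → Prop}

/-- The step function realizing the generating relation. -/
def rackStep (hP : ∀ σ τ : Equiv.Perm (Fin n), P σ → P τ → P (σ * τ * σ⁻¹))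
    (a : {σ : Equiv.Perm (Fin n) // P σ} × {σ : Equiv.Perm (Fin n) // P σ}) :
    {σ : Equiv.Perm (Fin n) // P σ} × {σ : Equiv.Perm (Fin n) // P σ} :=
  (⟨(a.1 : Equiv.Perm (Fin n)) * (a.2 : Equiv.Perm (Fin n)) * (a.1 : Equiv.Perm (Fin n))⁻¹,
      hP _ _ a.1.2 a.2.2⟩, a.1)

theorem genRel_iff (hP : ∀ σ τ : Equiv.Perm (Fin n), P σ → P τ → P (σ * τ * σ⁻¹))
    (a b : {σ : Equiv.Perm (Fin n) // P σ} × {σ : Equiv.Perm (Fin n) // P σ}) :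
    genRel a b ↔ b = rackStep hP a := by
  constructor
  · rintro ⟨h1, h2⟩
    exact Prod.ext (Subtype.ext h1) (Subtype.ext h2)
  · rintro rfl
    exact ⟨rfl, rfl⟩

theorem rackStep_inj (hP : ∀ σ τ : Equiv.Perm (Fin n), P σ → P τ → P (σ * τ * σ⁻¹)) :
    Function.Injective (rackStep hP) := by
  intro a b h
  have h2 : a.1 = b.1 := congrArg Prod.snd h
  have h1 : (a.1 : Equiv.Perm (Fin n)) * a.2 * (a.1 : Equiv.Perm (Fin n))⁻¹ =
      (b.1 : Equiv.Perm (Fin n)) * b.2 * (b.1 : Equiv.Perm (Fin n))⁻¹ :=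
    congrArg (fun x => (x.1 : Equiv.Perm (Fin n))) h
  rw [h2] at h1
  have h3 : (a.2 : Equiv.Perm (Fin n)) = b.2 := mul_left_cancel (mul_right_cancel h1)
  exact Prod.ext h2 (Subtype.ext h3)

theorem class_eq (hP : ∀ σ τ : Equiv.Perm (Fin n), P σ → P τ → P (σ * τ * σ⁻¹))
    (p : {σ : Equiv.Perm (Fin n) // P σ} × {σ : Equiv.Perm (Fin n) // P σ})
    (hper : rackStep hP (rackStep hP p) = p ∨
        rackStep hP (rackStep hP (rackStep hP p)) = p) :
    {x | Relation.EqvGen genRel p x} =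
      {p, rackStep hP p, rackStep hP (rackStep hP p)} := by
  set f := rackStep hP with hf
  set S : Set _ := {p, f p, f (f p)} with hS
  have memS : ∀ a, a ∈ S ↔ a = p ∨ a = f p ∨ a = f (f p) := by
    intro a
    simp [hS, Set.mem_insert_iff]
  have hfwd : ∀ a, a ∈ S → f a ∈ S := by
    intro a ha
    rcases (memS a).mp ha with h | h | h
    · rw [h]; exact (memS _).mpr (Or.inr (Or.inl rfl))
    · rw [h]; exact (memS _).mpr (Or.inr (Or.inr rfl))
    · rw [h]
      rcases hper with h2 | h2
      · rw [congrArg f h2]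
        exact (memS _).mpr (Or.inr (Or.inl rfl))
      · rw [h2]
        exact (memS _).mpr (Or.inl rfl)
  have hbwd : ∀ a, f a ∈ S → a ∈ S := by
    intro a ha
    have key : ∀ b, b ∈ S → ∃ c, c ∈ S ∧ f c = b := by
      intro b hb
      rcases (memS b).mp hb with hbp | hbp | hbp
      · rcases hper with h2 | h2
        · exact ⟨f p, (memS _).mpr (Or.inr (Or.inl rfl)), by rw [hbp]; exact h2⟩
        · exact ⟨f (f p), (memS _).mpr (Or.inr (Or.inr rfl)), by rw [hbp]; exact h2⟩
      · exact ⟨p, (memS _).mpr (Or.inl rfl), hbp.symm⟩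
      · exact ⟨f p, (memS _).mpr (Or.inr (Or.inl rfl)), hbp.symm⟩
    obtain ⟨c, hc, hfc⟩ := key _ ha
    have : c = a := rackStep_inj hP hfc
    rwa [← this]
  apply Set.Subset.antisymm
  · intro x hx
    have inv : ∀ a b, Relation.EqvGen genRel a b → (a ∈ S ↔ b ∈ S) := by
      intro a b hab
      induction hab with
      | rel a b hr =>
        rw [genRel_iff hP] at hr
        subst hr
        exact ⟨fun h' => hfwd _ h', fun h' => hbwd _ h'⟩
      | refl => exact Iff.rfl
      | symm _ _ _ ih => exact ih.symm
      | trans _ _ _ _ _ ih1 ih2 => exact ih1.trans ih2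
    exact (inv p x hx).mp ((memS p).mpr (Or.inl rfl))
  · intro x hxS
    rcases (memS x).mp hxS with h | h | h
    · rw [h]; exact Relation.EqvGen.refl p
    · rw [h]; exact Relation.EqvGen.rel _ _ ((genRel_iff hP p _).mpr rfl)
    · rw [h]
      exact Relation.EqvGen.trans _ _ _
        (Relation.EqvGen.rel _ _ ((genRel_iff hP p _).mpr rfl))
        (Relation.EqvGen.rel _ _ ((genRel_iff hP (f p) _).mpr rfl))

theorem ncard_triple {α : Type*} (a b c : α) :
    ({a, b, c} : Set α).ncard = 1 ∨ ({a, b, c} : Set α).ncard = 2 ∨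
      ({a, b, c} : Set α).ncard = 3 := by
  have hfin : ({a, b, c} : Set α).Finite :=
    (((Set.finite_singleton c).insert b).insert a)
  have h1 : 0 < ({a, b, c} : Set α).ncard :=
    (Set.ncard_pos hfin).mpr ⟨a, Or.inl rfl⟩
  have h3 : ({a, b, c} : Set α).ncard ≤ 3 := by
    refine le_trans (Set.ncard_insert_le a _) ?_
    have h4 := Set.ncard_insert_le b ({c} : Set α)
    have hc : ({c} : Set α).ncard = 1 := Set.ncard_singleton c
    omega
  omega

theorem step_sq (hP : ∀ σ τ : Equiv.Perm (Fin n), P σ → P τ → P (σ * τ * σ⁻¹))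
    (p : {σ : Equiv.Perm (Fin n) // P σ} × {σ : Equiv.Perm (Fin n) // P σ})
    (hc : Commute (p.1 : Equiv.Perm (Fin n)) (p.2 : Equiv.Perm (Fin n))) :
    rackStep hP (rackStep hP p) = p := by
  have e1 : (p.1 : Equiv.Perm (Fin n)) * p.2 * (p.1 : Equiv.Perm (Fin n))⁻¹ = p.2 := by
    rw [hc.eq, mul_inv_cancel_right]
  have e2 : (p.2 : Equiv.Perm (Fin n)) * p.1 * (p.2 : Equiv.Perm (Fin n))⁻¹ = p.1 := by
    rw [← hc.eq, mul_inv_cancel_right]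
  refine Prod.ext (Subtype.ext ?_) (Subtype.ext ?_)
  · show ((p.1 : Equiv.Perm (Fin n)) * p.2 * (p.1 : Equiv.Perm (Fin n))⁻¹) * p.1 *
      ((p.1 : Equiv.Perm (Fin n)) * p.2 * (p.1 : Equiv.Perm (Fin n))⁻¹)⁻¹ = p.1
    rw [e1]; exact e2
  · exact e1

theorem step_cube (hP : ∀ σ τ : Equiv.Perm (Fin n), P σ → P τ → P (σ * τ * σ⁻¹))
    (p : {σ : Equiv.Perm (Fin n) // P σ} × {σ : Equiv.Perm (Fin n) // P σ})
    (hb : (p.1 : Equiv.Perm (Fin n)) * p.2 * p.1 =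
        (p.2 : Equiv.Perm (Fin n)) * p.1 * p.2) :
    rackStep hP (rackStep hP (rackStep hP p)) = p := by
  set i := (p.1 : Equiv.Perm (Fin n)) with hi
  set j := (p.2 : Equiv.Perm (Fin n)) with hj
  have h2 : (i * j * i⁻¹) * i * (i * j * i⁻¹)⁻¹ = j := by
    have e : (i * j * i⁻¹) * i * (i * j * i⁻¹)⁻¹ = (i * j * i) * (j⁻¹ * i⁻¹) := by group
    rw [e, hb]; group
  have h1 : ((i * j * i⁻¹) * i * (i * j * i⁻¹)⁻¹) * (i * j * i⁻¹) *
      (((i * j * i⁻¹) * i * (i * j * i⁻¹)⁻¹))⁻¹ = i := by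
    rw [h2]
    have e : j * (i * j * i⁻¹) * j⁻¹ = (j * i * j) * (i⁻¹ * j⁻¹) := by group
    rw [e, ← hb]; group
  refine Prod.ext (Subtype.ext ?_) (Subtype.ext ?_)
  · exact h1
  · exact h2

theorem swap_braid {α : Type*} [DecidableEq α] {a b d : α}
    (h1 : a ≠ b) (h2 : a ≠ d) (h3 : b ≠ d) :
    Equiv.swap a b * Equiv.swap a d * Equiv.swap a b =
      Equiv.swap a d * Equiv.swap a b * Equiv.swap a d := by
  have l : Equiv.swap a b * Equiv.swap a d * Equiv.swap a b = Equiv.swap b d := by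
    calc Equiv.swap a b * Equiv.swap a d * Equiv.swap a b
        = Equiv.swap a b * Equiv.swap a d * (Equiv.swap a b)⁻¹ := by
          rw [Equiv.swap_inv]
      _ = Equiv.swap (Equiv.swap a b a) (Equiv.swap a b d) :=
          (Equiv.swap_apply_apply _ _ _).symm
      _ = Equiv.swap b d := by
          rw [Equiv.swap_apply_left, Equiv.swap_apply_of_ne_of_ne h2.symm h3.symm]
  have r : Equiv.swap a d * Equiv.swap a b * Equiv.swap a d = Equiv.swap b d := by
    calc Equiv.swap a d * Equiv.swap a b * Equiv.swap a d
        = Equiv.swap a d * Equiv.swap a b * (Equiv.swap a d)⁻¹ := by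
          rw [Equiv.swap_inv]
      _ = Equiv.swap (Equiv.swap a d a) (Equiv.swap a d b) :=
          (Equiv.swap_apply_apply _ _ _).symm
      _ = Equiv.swap b d := by
          rw [Equiv.swap_apply_left, Equiv.swap_apply_of_ne_of_ne h1.symm h3,
            Equiv.swap_comm]
  rw [l, r]

theorem swap_commute_disjoint {α : Type*} [DecidableEq α] {a b c d : α}
    (hca : c ≠ a) (hcb : c ≠ b) (hda : d ≠ a) (hdb : d ≠ b) :
    Commute (Equiv.swap a b) (Equiv.swap c d) := by
  have hs : Equiv.swap c d * Equiv.swap a b * (Equiv.swap c d)⁻¹ = Equiv.swap a b := by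
    rw [← Equiv.swap_apply_apply, Equiv.swap_apply_of_ne_of_ne hca.symm hda.symm,
      Equiv.swap_apply_of_ne_of_ne hcb.symm hdb.symm]
  exact (mul_inv_eq_iff_eq_mul.mp hs).symm

theorem swap_comm_or_braid {m : ℕ} (i j : Equiv.Perm (Fin m))
    (hi : i.IsSwap) (hj : j.IsSwap) :
    Commute i j ∨ i * j * i = j * i * j := by
  obtain ⟨a, b, hab, rfl⟩ := hi
  obtain ⟨c, d, hcd, rfl⟩ := hj
  by_cases hca : c = a
  · by_cases hdb : d = b
    · rw [hca, hdb]
      exact Or.inl (Commute.refl _)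
    · rw [hca] at hcd ⊢
      exact Or.inr (swap_braid hab hcd (Ne.symm hdb))
  · by_cases hcb : c = b
    · by_cases hda : d = a
      · rw [hcb, hda, Equiv.swap_comm b a]
        exact Or.inl (Commute.refl _)
      · rw [hcb] at hcd ⊢
        rw [Equiv.swap_comm a b]
        exact Or.inr (swap_braid (Ne.symm hab) hcd (Ne.symm hda))
    · by_cases hda : d = a
      · rw [hda] at hcd ⊢
        rw [Equiv.swap_comm c a]
        exact Or.inr (swap_braid hab hcd.symm (Ne.symm hcb))
      · by_cases hdb : d = b
        · rw [hdb] at hcd ⊢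
          rw [Equiv.swap_comm a b, Equiv.swap_comm c b]
          exact Or.inr (swap_braid (Ne.symm hab) hcd.symm (Ne.symm hca))
        · exact Or.inl (swap_commute_disjoint hca hcb hda hdb)

set_option maxRecDepth 40000 in
theorem four_cycle_comm_or_braid (i j : Equiv.Perm (Fin 4))
    (hi : orderOf i = 4) (hj : orderOf j = 4) :
    Commute i j ∨ i * j * i = j * i * j := by
  have key : ∀ x y : Equiv.Perm (Fin 4), x ^ 4 = 1 → ¬x ^ 2 = 1 → y ^ 4 = 1 →
      ¬y ^ 2 = 1 → x * y = y * x ∨ x * y * x = y * x * y := by decide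
  have hi4 : i ^ 4 = 1 := by
    have h := pow_orderOf_eq_one i
    rwa [hi] at h
  have hj4 : j ^ 4 = 1 := by
    have h := pow_orderOf_eq_one j
    rwa [hj] at h
  have hi2 : ¬i ^ 2 = 1 := by
    intro h
    have := orderOf_dvd_of_pow_eq_one h
    rw [hi] at this
    omega
  have hj2 : ¬j ^ 2 = 1 := by
    intro h
    have := orderOf_dvd_of_pow_eq_one h
    rw [hj] at this
    omega
  exact key i j hi4 hi2 hj4 hj2

end Aux

/-- For `X = O₂ⁿ` (transpositions in `S_n`, `n ≥ 3`) and for `X = O₄⁴`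
(4-cycles in `S₄`, i.e. elements of order 4), every equivalence class in `X × X` for the
relation generated by `(i,j) ∼ (i▷j, i)` has exactly 1, 2 or 3 elements. -/
theorem equivalence_classes_have_at_most_three_elements :
    (∀ n : ℕ, 3 ≤ n →
      ∀ p : {σ : Equiv.Perm (Fin n) // σ.IsSwap} × {σ : Equiv.Perm (Fin n) // σ.IsSwap},
        {x | Relation.EqvGen genRel p x}.ncard = 1 ∨
        {x | Relation.EqvGen genRel p x}.ncard = 2 ∨
        {x | Relation.EqvGen genRel p x}.ncard = 3) ∧
    (∀ p : {σ : Equiv.Perm (Fin 4) // orderOf σ = 4} × {σ : Equiv.Perm (Fin 4) // orderOf σ = 4},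
        {x | Relation.EqvGen genRel p x}.ncard = 1 ∨
        {x | Relation.EqvGen genRel p x}.ncard = 2 ∨
        {x | Relation.EqvGen genRel p x}.ncard = 3) := by
  constructor
  · intro n _ p
    have hP : ∀ σ τ : Equiv.Perm (Fin n), σ.IsSwap → τ.IsSwap → (σ * τ * σ⁻¹).IsSwap := by
      intro σ τ _ hτ
      obtain ⟨x, y, hxy, rfl⟩ := hτ
      exact ⟨σ x, σ y, fun h => hxy (σ.injective h), (Equiv.swap_apply_apply σ x y).symm⟩
    rcases swap_comm_or_braid (p.1 : Equiv.Perm (Fin n)) (p.2 : Equiv.Perm (Fin n))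
        p.1.2 p.2.2 with hc | hb
    · rw [class_eq hP p (Or.inl (step_sq hP p hc))]
      exact ncard_triple _ _ _
    · rw [class_eq hP p (Or.inr (step_cube hP p hb))]
      exact ncard_triple _ _ _
  · intro p
    have hP : ∀ σ τ : Equiv.Perm (Fin 4), orderOf σ = 4 → orderOf τ = 4 →
        orderOf (σ * τ * σ⁻¹) = 4 := by
      intro σ τ _ hτ
      have hsc : SemiconjBy σ τ (σ * τ * σ⁻¹) := by
        show σ * τ = σ * τ * σ⁻¹ * σ
        group
      rw [← SemiconjBy.orderOf_eq σ hsc]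
      exact hτ
    rcases four_cycle_comm_or_braid (p.1 : Equiv.Perm (Fin 4)) (p.2 : Equiv.Perm (Fin 4))
        p.1.2 p.2.2 with hc | hb
    · rw [class_eq hP p (Or.inl (step_sq hP p hc))]
      exact ncard_triple _ _ _
    · rw [class_eq hP p (Or.inr (step_cube hP p hb))]
      exact ncard_triple _ _ _
end

section
/- Let X = O_2^n or O_4^4 with a 2-cocycle q, realized in G = S_n via the inclusion, and suppose scalars (λ_C) indexed by the equivalence classes C ∈ R' satisfy λ_C = q(k,i_2)q(k,i_1)·λ_{k▷C} for all k ∈ X, where C = {i_1,...,i_n} and k▷C = {k▷i_1,...,k▷i_n}. If q is the cocycle χ on O_2^n, then for any class C with 2 elements (i.e. C = {(ij),(kl)} with disjoint transpositions) one has λ_C = 0. -/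
/-- A swap commuting with a distinct swap `swap c d` fixes `c`. -/
lemma swap_commute_fix {n : ℕ} (σ : Equiv.Perm (Fin n)) (hσ : σ.IsSwap)
    (c d : Fin n) (hcd : c ≠ d) (h : σ * Equiv.swap c d = Equiv.swap c d * σ)
    (hne : σ ≠ Equiv.swap c d) : σ c = c := by
  by_contra h1
  have key : σ d = Equiv.swap c d (σ c) := by
    have := congrArg (fun f => f c) h
    simpa [Equiv.Perm.mul_apply, Equiv.swap_apply_left] using this
  by_cases h2 : σ c = d
  · -- then σ d = c and σ = swap c d
    rw [h2, Equiv.swap_apply_right] at key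
    obtain ⟨a, b, hab, rfl⟩ := hσ
    have hc : c = a ∨ c = b := by
      by_contra hcab
      push_neg at hcab
      exact h1 (Equiv.swap_apply_of_ne_of_ne hcab.1 hcab.2)
    rcases hc with rfl | rfl
    · rw [Equiv.swap_apply_left] at h2
      exact hne (by rw [h2])
    · rw [Equiv.swap_apply_right] at h2
      exact hne (by rw [h2, Equiv.swap_comm])
  · rw [Equiv.swap_apply_of_ne_of_ne h1 h2] at key
    exact hcd (σ.injective key.symm)

/-- For the rack of transpositions `O₂ⁿ` in `S_n` with the cocycle `χ`
(given by `χ(σ,(i j)) = 1` if `σ(i) < σ(j)` and `-1` otherwise, for `i < j`), any family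
of scalars `λ` constant on equivalence classes of the relation generated by
`(i,j) ∼ (i▷j,i)` and satisfying the compatibility `λ_C = χ(g,i₂)χ(g,i₁)·λ_{g▷C}`
vanishes on every 2-element class, i.e. on every pair of distinct commuting
(disjoint) transpositions. -/
theorem lambda_vanishes_on_two_element_classes {k : Type*} [Field k] [CharZero k]
    (n : ℕ) (hn : 4 ≤ n)
    (χ : Equiv.Perm (Fin n) → Equiv.Perm (Fin n) → k)
    (hχ : ∀ (σ : Equiv.Perm (Fin n)) (i j : Fin n), i < j →
      χ σ (Equiv.swap i j) = if σ i < σ j then 1 else -1)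
    (lam : Equiv.Perm (Fin n) × Equiv.Perm (Fin n) → k)
    -- `λ` is constant on equivalence classes: invariance under the generating relation
    (hconst : ∀ σ τ : Equiv.Perm (Fin n), σ.IsSwap → τ.IsSwap →
      lam (σ, τ) = lam (σ * τ * σ⁻¹, σ))
    -- compatibility `λ_C = q(g,i₂)q(g,i₁)·λ_{g▷C}` for all `g ∈ X`
    (hcomp : ∀ g σ τ : Equiv.Perm (Fin n), g.IsSwap → σ.IsSwap → τ.IsSwap →
      lam (σ, τ) = χ g σ * χ g τ * lam (g * σ * g⁻¹, g * τ * g⁻¹)) :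
    ∀ σ τ : Equiv.Perm (Fin n), σ.IsSwap → τ.IsSwap → σ * τ = τ * σ → σ ≠ τ →
      lam (σ, τ) = 0 := by
  intro σ τ hσ hτ hcomm hne
  -- write σ = swap a b with a < b, τ = swap c d with c < d
  obtain ⟨a, b, hab, hσeq⟩ := hσ
  obtain ⟨c, d, hcd, hτeq⟩ := hτ
  -- WLOG orderings
  have hσ' : σ.IsSwap := ⟨a, b, hab, hσeq⟩
  have hτ' : τ.IsSwap := ⟨c, d, hcd, hτeq⟩
  wlog hab' : a < b generalizing a b
  · exact this b a hab.symm (by rw [hσeq, Equiv.swap_comm]) ((hab.lt_or_gt).resolve_left hab')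
  wlog hcd' : c < d generalizing c d
  · exact this d c hcd.symm (by rw [hτeq, Equiv.swap_comm]) ((hcd.lt_or_gt).resolve_left hcd')
  -- σ fixes c and d
  have hσne : σ ≠ Equiv.swap c d := by rw [← hτeq]; exact hne
  have hfc : σ c = c :=
    swap_commute_fix σ hσ' c d hcd (by rw [← hτeq]; exact hcomm) hσne
  have hfd : σ d = d := by
    refine swap_commute_fix σ hσ' d c hcd.symm ?_ ?_
    · rw [Equiv.swap_comm, ← hτeq]; exact hcomm
    · rw [Equiv.swap_comm, ← hτeq]; exact hne
  -- compute χ σ σ = -1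
  have hχσσ : χ σ σ = -1 := by
    rw [hσeq, hχ _ a b hab']
    simp [Equiv.swap_apply_left, Equiv.swap_apply_right, not_lt.mpr hab'.le,
      asymm hab']
  -- compute χ σ τ = 1
  have hχστ : χ σ τ = 1 := by
    rw [show τ = Equiv.swap c d from hτeq, hχ _ c d hcd', hfc, hfd, if_pos hcd']
  -- conjugation by σ fixes both σ and τ
  have hconj1 : σ * σ * σ⁻¹ = σ := by group
  have hconj2 : σ * τ * σ⁻¹ = τ := by
    rw [hcomm]; group
  have := hcomp σ σ τ hσ' hσ' hτ'
  rw [hχσσ, hχστ, hconj1, hconj2] at this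
  have h2 : (2 : k) * lam (σ, τ) = 0 := by linear_combination this
  have := mul_eq_zero.mp h2
  rcases this with h | h
  · exact absurd h two_ne_zero
  · exact h
end
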